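/- arXiv:2505.09648 — 5 statements merged into one kernel-verified Lean document; each statement's English description precedes it below -/
import Mathlib

section
/- Let n ≥ 6 be even and let a₀ ≥ a₁ ≥ ... ≥ a_{n-1} be a decreasing sequence in [0,1]. Suppose that for all triples (i,j,k) with 0 ≤ i,j,k ≤ n-1 and i + j + k ≥ n, we have aᵢaⱼ + aⱼa_k + a_k aᵢ ≤ (1/2)(aᵢ + aⱼ + a_k). Then the average (1/n)∑_{j=0}^{n-1} aⱼ is at most 1/2. -/
set_option maxHeartbeats 1000000

/-- Core 6-variable inequality. -/
lemma core_ineq (x c P Q R D : ℝ) (hx1 : x ≤ 1) (hcx : c ≤ x) (hPc : P ≤ c)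
    (hP2 : P ≤ 1/2) (hQP : Q ≤ P) (hRQ : R ≤ Q) (hDR : D ≤ R) (hD0 : 0 ≤ D)
    (g1 : x*P + P*R + R*x ≤ 1/2*(x+P+R))
    (g2 : x*Q + Q*Q + Q*x ≤ 1/2*(x+Q+Q))
    (g3 : c*P + P*Q + Q*c ≤ 1/2*(c+P+Q))
    (g4 : x*c + c*D + D*x ≤ 1/2*(x+c+D))
    (g5 : c*c + c*R + R*c ≤ 1/2*(c+c+R))
    (g6 : c*c + c*D + D*c ≤ 1/2*(c+c+D))
    (g7 : c*Q + Q*R + R*c ≤ 1/2*(c+Q+R))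
    (g8 : c*P + P*R + R*c ≤ 1/2*(c+P+R)) :
    x + c + P + Q + R + D ≤ 3 := by
  rcases le_or_gt c (1/2) with hc | hc
  · rcases le_or_gt x (1/2) with hx | hx
    · linarith
    · nlinarith [mul_nonneg (by linarith : (0:ℝ) ≤ 1-2*P) (by linarith : (0:ℝ) ≤ 1-2*R),
        mul_nonneg (by linarith : (0:ℝ) ≤ 1-2*c) (by linarith : (0:ℝ) ≤ 1-2*D),
        sq_nonneg (1-2*Q),
        mul_nonneg (by linarith : (0:ℝ) ≤ 2*x-1) (by linarith : (0:ℝ) ≤ 1-x)]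
  · rcases le_or_gt x (3/4) with hx | hx
    · nlinarith [mul_nonneg (by linarith : (0:ℝ) ≤ 1-2*P) (by linarith : (0:ℝ) ≤ 1-2*R),
        sq_nonneg (1-2*Q),
        mul_nonneg (by linarith : (0:ℝ) ≤ 2*c-1) (by linarith : (0:ℝ) ≤ 1-c),
        mul_nonneg (by linarith : (0:ℝ) ≤ 2*x-1) (by linarith : (0:ℝ) ≤ 3/4-x)]
    · nlinarith [mul_nonneg (by linarith : (0:ℝ) ≤ 1-2*P) (by linarith : (0:ℝ) ≤ 1-2*Q),
        mul_nonneg (by linarith : (0:ℝ) ≤ 1-2*Q) (by linarith : (0:ℝ) ≤ 1-2*R),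
        mul_nonneg (by linarith : (0:ℝ) ≤ 1-2*P) (by linarith : (0:ℝ) ≤ 1-2*R),
        mul_nonneg (by linarith : (0:ℝ) ≤ 1-2*R) (by linarith : (0:ℝ) ≤ 1-2*D),
        mul_nonneg (by linarith : (0:ℝ) ≤ 2*c-1) (by linarith : (0:ℝ) ≤ 1-x),
        mul_nonneg (by linarith : (0:ℝ) ≤ 2*x-1) (by linarith : (0:ℝ) ≤ 1-c),
        mul_nonneg (by linarith : (0:ℝ) ≤ 2*c-1) (by linarith : (0:ℝ) ≤ x-c),
        sq_nonneg (x-c), sq_nonneg (c-P), sq_nonneg (P-Q), sq_nonneg (Q-R)]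

/-- Pair inequality: x ≥ y, x ≤ 1, y ≥ 0, x² + 2xy ≤ x + y/2 ⟹ x + y ≤ 1. -/
lemma pair_le_one (x y : ℝ) (hyx : y ≤ x) (hx1 : x ≤ 1) (hy0 : 0 ≤ y)
    (g : x*x + x*y + y*x ≤ 1/2*(x+x+y)) : x + y ≤ 1 := by
  rcases le_or_gt x (1/2) with hx | hx
  · linarith
  · nlinarith [mul_nonneg (by linarith : (0:ℝ) ≤ 1-x) (by linarith : (0:ℝ) ≤ x-1/2)]

theorem stmt_1 (n : ℕ) (hn : 6 ≤ n) (hne : Even n) (a : ℕ → ℝ)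
    (hmem : ∀ i, i < n → a i ∈ Set.Icc (0 : ℝ) 1)
    (hdec : ∀ i j, i ≤ j → j < n → a j ≤ a i)
    (h : ∀ i j k, i < n → j < n → k < n → n ≤ i + j + k →
      a i * a j + a j * a k + a k * a i ≤ (1 / 2) * (a i + a j + a k)) :
    (1 / n : ℝ) * ∑ j ∈ Finset.range n, a j ≤ 1 / 2 := by
  obtain ⟨m, rfl⟩ := hne
  have hm : 3 ≤ m := by omega
  -- abbreviations
  have ha0 : ∀ i, i < m + m → 0 ≤ a i := fun i hi => (hmem i hi).1
  have ha1 : ∀ i, i < m + m → a i ≤ 1 := fun i hi => (hmem i hi).2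
  -- sum decomposition
  have reflect : ∑ i ∈ Finset.Ico 1 m, a (m + m - i) = ∑ i ∈ Finset.Ico (m+1) (m+m), a i := by
    have e := Finset.sum_Ico_reflect a 1 (n := m + m) (m := m) (by omega)
    rw [show m + m + 1 - m = m + 1 from by omega, show m + m + 1 - 1 = m + m from by omega] at e
    exact e
  have hsplit1 : ∑ i ∈ Finset.range (m+m), a i
      = a 0 + (∑ i ∈ Finset.Ico 1 m, a i + ∑ i ∈ Finset.Ico 1 m, a (m + m - i)) + a m := by
    rw [reflect, Finset.range_eq_Ico]
    rw [← Finset.sum_Ico_consecutive a (by omega : (0:ℕ) ≤ 1) (by omega : 1 ≤ m + m)]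
    rw [← Finset.sum_Ico_consecutive a (by omega : (1:ℕ) ≤ m) (by omega : m ≤ m + m)]
    rw [← Finset.sum_Ico_consecutive a (by omega : m ≤ m + 1) (by omega : m + 1 ≤ m + m)]
    have e0 : Finset.Ico 0 1 = {0} := by decide
    have em : Finset.Ico m (m+1) = {m} := by
      ext x; simp [Finset.mem_Ico]
    rw [e0, em, Finset.sum_singleton, Finset.sum_singleton]
    ring
  have hsplit2 : ∑ i ∈ Finset.Ico 1 m, a i + ∑ i ∈ Finset.Ico 1 m, a (m + m - i)
      = ∑ i ∈ Finset.Ico 1 (m-2), (a i + a (m + m - i))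
        + (a (m-2) + a (m + m - (m-2))) + (a (m-1) + a (m + m - (m-1))) := by
    rw [← Finset.sum_add_distrib]
    rw [← Finset.sum_Ico_consecutive _ (by omega : (1:ℕ) ≤ m - 2) (by omega : m - 2 ≤ m)]
    have e2 : Finset.Ico (m-2) m = {m-2, m-1} := by
      ext x; simp [Finset.mem_Ico, Finset.mem_insert]; omega
    rw [e2, Finset.sum_insert (by simp; omega), Finset.sum_singleton]
    ring
  -- pair bounds on Ico 1 (m-2)
  have hpairs : ∀ i ∈ Finset.Ico 1 (m-2), a i + a (m + m - i) ≤ 1 := by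
    intro i hi
    simp only [Finset.mem_Ico] at hi
    apply pair_le_one
    · exact hdec i (m + m - i) (by omega) (by omega)
    · exact ha1 i (by omega)
    · exact ha0 (m + m - i) (by omega)
    · exact h i i (m + m - i) (by omega) (by omega) (by omega) (by omega)
  have hsum_pairs : ∑ i ∈ Finset.Ico 1 (m-2), (a i + a (m + m - i)) ≤ ((m:ℝ) - 3) := by
    calc ∑ i ∈ Finset.Ico 1 (m-2), (a i + a (m + m - i))
        ≤ ∑ i ∈ Finset.Ico 1 (m-2), (1:ℝ) := Finset.sum_le_sum hpairs
      _ = ((m - 3 : ℕ) : ℝ) := by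
          rw [Finset.sum_const, Nat.card_Ico, nsmul_eq_mul, mul_one,
            show m - 2 - 1 = m - 3 from by omega]
      _ = (m:ℝ) - 3 := by
          have : (3:ℕ) ≤ m := hm
          push_cast [Nat.cast_sub this]; ring
  -- the six special values
  have hi2 : m + m - (m - 2) = m + 2 := by omega
  have hi1 : m + m - (m - 1) = m + 1 := by omega
  -- a (m-1) ≤ 1/2
  have hP2 : a (m-1) ≤ 1/2 := by
    have hg := h (m-1) (m-1) (m-1) (by omega) (by omega) (by omega) (by omega)
    have h0 := ha0 (m-1) (by omega)
    nlinarith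
  have hX : a 0 + a (m-2) + a (m-1) + a m + a (m+1) + a (m+2) ≤ 3 := by
    apply core_ineq
    · exact ha1 0 (by omega)
    · exact hdec 0 (m-2) (by omega) (by omega)
    · exact hdec (m-2) (m-1) (by omega) (by omega)
    · exact hP2
    · exact hdec (m-1) m (by omega) (by omega)
    · exact hdec m (m+1) (by omega) (by omega)
    · exact hdec (m+1) (m+2) (by omega) (by omega)
    · exact ha0 (m+2) (by omega)
    · exact h 0 (m-1) (m+1) (by omega) (by omega) (by omega) (by omega)
    · exact h 0 m m (by omega) (by omega) (by omega) (by omega)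
    · exact h (m-2) (m-1) m (by omega) (by omega) (by omega) (by omega)
    · exact h 0 (m-2) (m+2) (by omega) (by omega) (by omega) (by omega)
    · exact h (m-2) (m-2) (m+1) (by omega) (by omega) (by omega) (by omega)
    · exact h (m-2) (m-2) (m+2) (by omega) (by omega) (by omega) (by omega)
    · exact h (m-2) m (m+1) (by omega) (by omega) (by omega) (by omega)
    · exact h (m-2) (m-1) (m+1) (by omega) (by omega) (by omega) (by omega)
  -- total
  have hS : ∑ i ∈ Finset.range (m+m), a i ≤ (m:ℝ) := by
    rw [hsplit1, hsplit2, hi2, hi1]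
    linarith
  have hNpos : (0:ℝ) < ((m + m : ℕ) : ℝ) := by
    have : 0 < m + m := by omega
    exact_mod_cast this
  calc (1 / ((m+m:ℕ)) : ℝ) * ∑ j ∈ Finset.range (m+m), a j
      ≤ (1 / ((m+m:ℕ)) : ℝ) * (m:ℝ) := by
        apply mul_le_mul_of_nonneg_left hS (by positivity)
    _ = 1 / 2 := by
        have hm0 : (0:ℝ) < (m:ℝ) := by exact_mod_cast (by omega : 0 < m)
        rw [show ((m+m:ℕ):ℝ) = 2*(m:ℝ) from by push_cast; ring]
        field_simp
end

section
/- For the function f : (ℤ/15ℤ)* → [0,1] that equals 1 on {1, 7} and 0 elsewhere, we have ∑_{x ∈ (ℤ/15ℤ)*} f(x) = φ(15)/4, yet there is no way to write 12 modulo 15 as a₁ + a₂ + a₃ with units aᵢ satisfying f(aᵢ) > 0 for all i. (Hence the threshold φ(m)/4 in the density ternary local result is sharp.) -/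
theorem stmt_6 (f : (ZMod 15)ˣ → ℝ)
    (hf : ∀ a : (ZMod 15)ˣ,
      f a = if (a : ZMod 15) = 1 ∨ (a : ZMod 15) = 7 then 1 else 0) :
    (∑ x : (ZMod 15)ˣ, f x = (Nat.totient 15 : ℝ) / 4) ∧
    ¬ ∃ a₁ a₂ a₃ : (ZMod 15)ˣ,
      (12 : ZMod 15) = (a₁ : ZMod 15) + (a₂ : ZMod 15) + (a₃ : ZMod 15) ∧
      0 < f a₁ ∧ 0 < f a₂ ∧ 0 < f a₃ := by
  have hpos : ∀ a : (ZMod 15)ˣ, 0 < f a ↔ ((a : ZMod 15) = 1 ∨ (a : ZMod 15) = 7) := by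
    intro a
    rw [hf a]
    split <;> simp_all
  constructor
  · simp only [hf, Finset.sum_ite_eq, Finset.sum_boole]
    norm_num
    have : (Finset.filter (fun x : (ZMod 15)ˣ => x = 1 ∨ (x : ZMod 15) = 7) Finset.univ).card = 2 := by decide
    rw [this]
    have h8 : Nat.totient 15 = 8 := by decide
    rw [h8]; norm_num
  · rintro ⟨a₁, a₂, a₃, h, h1, h2, h3⟩
    rw [hpos] at h1 h2 h3
    revert h
    revert h1 h2 h3
    revert a₁ a₂ a₃
    decide
end

section
/- Let x₀ ≥ x₁ ≥ ... ≥ x_{2m-1} be a decreasing sequence of reals in [-1,3] with m ≥ 4, and suppose xᵢxⱼ + xⱼx_k + x_k xᵢ ≤ 3 for all triples (i,j,k) with i + j + k ≥ 2m. Then, writing S₀ = ∑_{i=0}^{m-1} xᵢ and S₁ = ∑_{i=m}^{2m-1} xᵢ, one has S₀² + 2S₀S₁ ≤ 3m² + (x₀² − x_m²). -/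
theorem stmt_9 (m : ℕ) (hm : 4 ≤ m) (x : ℕ → ℝ)
    (hmem : ∀ i, i < 2 * m → x i ∈ Set.Icc (-1 : ℝ) 3)
    (hdec : ∀ i j, i ≤ j → j < 2 * m → x j ≤ x i)
    (h : ∀ i j k, i < 2 * m → j < 2 * m → k < 2 * m → 2 * m ≤ i + j + k →
      x i * x j + x j * x k + x k * x i ≤ 3) :
    (∑ i ∈ Finset.range m, x i) ^ 2 +
      2 * (∑ i ∈ Finset.range m, x i) * (∑ i ∈ Finset.Ico m (2 * m), x i) ≤
      3 * (m : ℝ) ^ 2 + (x 0 ^ 2 - x m ^ 2) := by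
  have hm0 : 0 < m := by omega
  set f : ℕ → ℕ → ℕ := fun i j => m + (m - (i + j) % m) % m with hf
  have hflt : ∀ i j, f i j < 2 * m := by
    intro i j
    have : (m - (i + j) % m) % m < m := Nat.mod_lt _ hm0
    simp only [hf]; omega
  have hfle : ∀ i j, m ≤ f i j := by intro i j; simp [hf]
  have hfsymm : ∀ i j, f i j = f j i := by intro i j; simp [hf, Nat.add_comm]
  have hf00 : f 0 0 = m := by simp [hf]
  have hbig : ∀ i j, 0 < i + j → 2 * m ≤ i + j + f i j := by
    intro i j hij
    have h2 : (i + j) % m < m := Nat.mod_lt _ hm0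
    have h3 : (i + j) % m ≤ i + j := Nat.mod_le _ _
    by_cases hr : (i + j) % m = 0
    · have hd : m ∣ i + j := Nat.dvd_of_mod_eq_zero hr
      have := Nat.le_of_dvd hij hd
      simp only [hf, hr, Nat.sub_zero, Nat.mod_self]
      omega
    · have heq : (m - (i + j) % m) % m = m - (i + j) % m :=
        Nat.mod_eq_of_lt (by omega)
      simp only [hf, heq]; omega
  have hinj : ∀ i, ∀ j ∈ Finset.range m, ∀ j' ∈ Finset.range m,
      f i j = f i j' → j = j' := by
    intro i j hj j' hj' hEq
    simp only [Finset.mem_range] at hj hj'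
    have h1 : (m - (i + j) % m) % m = (m - (i + j') % m) % m := by
      simp only [hf] at hEq; omega
    have h2 : (i + j) % m < m := Nat.mod_lt _ hm0
    have h2' : (i + j') % m < m := Nat.mod_lt _ hm0
    have h3 : (i + j) % m = (i + j') % m := by
      by_cases hr : (i + j) % m = 0 <;> by_cases hr' : (i + j') % m = 0
      · omega
      · rw [hr, Nat.sub_zero, Nat.mod_self,
          Nat.mod_eq_of_lt (show m - (i + j') % m < m by omega)] at h1
        omega
      · rw [hr', Nat.sub_zero, Nat.mod_self,
          Nat.mod_eq_of_lt (show m - (i + j) % m < m by omega)] at h1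
        omega
      · rw [Nat.mod_eq_of_lt (show m - (i + j) % m < m by omega),
          Nat.mod_eq_of_lt (show m - (i + j') % m < m by omega)] at h1
        omega
    have h4 : j ≡ j' [MOD m] := Nat.ModEq.add_left_cancel' i h3
    have h5 : j % m = j' % m := h4
    rwa [Nat.mod_eq_of_lt hj, Nat.mod_eq_of_lt hj'] at h5
  have himg : ∀ i, (Finset.range m).image (f i) = Finset.Ico m (2 * m) := by
    intro i
    apply Finset.eq_of_subset_of_card_le
    · intro k hk
      simp only [Finset.mem_image, Finset.mem_range] at hk
      obtain ⟨j, _, rfl⟩ := hk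
      exact Finset.mem_Ico.mpr ⟨hfle i j, hflt i j⟩
    · rw [Nat.card_Ico, Finset.card_image_of_injOn (fun a ha b hb => hinj i a ha b hb),
        Finset.card_range]
      omega
  have hrow : ∀ i, ∑ j ∈ Finset.range m, x (f i j) = ∑ k ∈ Finset.Ico m (2 * m), x k := by
    intro i
    rw [← himg i, Finset.sum_image (hinj i)]
  set S0 := ∑ i ∈ Finset.range m, x i with hS0
  set S1 := ∑ i ∈ Finset.Ico m (2 * m), x i with hS1
  have key : ∑ i ∈ Finset.range m, ∑ j ∈ Finset.range m,
      (x i * x j + x j * x (f i j) + x (f i j) * x i) = S0 ^ 2 + 2 * S0 * S1 := by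
    have e1 : ∑ i ∈ Finset.range m, ∑ j ∈ Finset.range m, x i * x j = S0 ^ 2 := by
      rw [← Finset.sum_mul_sum]; ring
    have e2 : ∑ i ∈ Finset.range m, ∑ j ∈ Finset.range m, x (f i j) * x i = S0 * S1 := by
      calc ∑ i ∈ Finset.range m, ∑ j ∈ Finset.range m, x (f i j) * x i
          = ∑ i ∈ Finset.range m, (∑ j ∈ Finset.range m, x (f i j)) * x i := by
            simp [Finset.sum_mul]
        _ = ∑ i ∈ Finset.range m, S1 * x i := by
            refine Finset.sum_congr rfl fun i _ => by rw [hrow i]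
        _ = S0 * S1 := by rw [← Finset.mul_sum]; ring
    have e3 : ∑ i ∈ Finset.range m, ∑ j ∈ Finset.range m, x j * x (f i j) = S0 * S1 := by
      rw [Finset.sum_comm]
      calc ∑ j ∈ Finset.range m, ∑ i ∈ Finset.range m, x j * x (f i j)
          = ∑ j ∈ Finset.range m, ∑ i ∈ Finset.range m, x (f j i) * x j := by
            refine Finset.sum_congr rfl fun j _ => Finset.sum_congr rfl fun i _ => by
              rw [hfsymm i j]; ring
        _ = S0 * S1 := e2
    calc ∑ i ∈ Finset.range m, ∑ j ∈ Finset.range m,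
        (x i * x j + x j * x (f i j) + x (f i j) * x i)
        = (∑ i ∈ Finset.range m, ∑ j ∈ Finset.range m, x i * x j)
          + (∑ i ∈ Finset.range m, ∑ j ∈ Finset.range m, x j * x (f i j))
          + (∑ i ∈ Finset.range m, ∑ j ∈ Finset.range m, x (f i j) * x i) := by
            simp [Finset.sum_add_distrib]
      _ = S0 ^ 2 + 2 * S0 * S1 := by rw [e1, e2, e3]; ring
  have hbound : ∀ i ∈ Finset.range m, ∀ j ∈ Finset.range m,
      x i * x j + x j * x (f i j) + x (f i j) * x i
        ≤ 3 + (if i = 0 ∧ j = 0 then x 0 ^ 2 - x m ^ 2 else 0) := by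
    intro i hi j hj
    simp only [Finset.mem_range] at hi hj
    by_cases h00 : i = 0 ∧ j = 0
    · obtain ⟨rfl, rfl⟩ := h00
      rw [hf00, if_pos (⟨rfl, rfl⟩ : (0:ℕ) = 0 ∧ (0:ℕ) = 0)]
      have hmm := h m m 0 (by omega) (by omega) (by omega) (by omega)
      nlinarith [hmm]
    · rw [if_neg h00]
      have hpos : 0 < i + j := by omega
      simpa using h i j (f i j) (by omega) (by omega) (hflt i j) (hbig i j hpos)
  have hsum_if : ∑ i ∈ Finset.range m, ∑ j ∈ Finset.range m,
      (if i = 0 ∧ j = 0 then x 0 ^ 2 - x m ^ 2 else 0) = x 0 ^ 2 - x m ^ 2 := by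
    rw [Finset.sum_eq_single 0]
    · rw [Finset.sum_eq_single 0]
      · simp
      · intro b _ hb; simp [hb]
      · intro hb; exact absurd (Finset.mem_range.mpr hm0) hb
    · intro b _ hb
      refine Finset.sum_eq_zero fun j _ => by simp [hb]
    · intro hb; exact absurd (Finset.mem_range.mpr hm0) hb
  have hle : S0 ^ 2 + 2 * S0 * S1 ≤ 3 * (m : ℝ) ^ 2 + (x 0 ^ 2 - x m ^ 2) := by
    rw [← key]
    calc ∑ i ∈ Finset.range m, ∑ j ∈ Finset.range m,
        (x i * x j + x j * x (f i j) + x (f i j) * x i)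
        ≤ ∑ i ∈ Finset.range m, ∑ j ∈ Finset.range m,
          (3 + (if i = 0 ∧ j = 0 then x 0 ^ 2 - x m ^ 2 else 0)) := by
          refine Finset.sum_le_sum fun i hi => Finset.sum_le_sum fun j hj =>
            hbound i hi j hj
      _ = 3 * (m : ℝ) ^ 2 + (x 0 ^ 2 - x m ^ 2) := by
          simp only [Finset.sum_add_distrib, hsum_if, Finset.sum_const,
            Finset.card_range, nsmul_eq_mul]
          push_cast
          ring
  exact hle
end

section
/- For real numbers x ∈ [1,2] and y ∈ [0.6, 1], the inequality 1 + 2y + √(3 + x²) + (3 − xy)/(x + y) ≤ 6 holds. -/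
theorem stmt_16 (x y : ℝ) (hx : x ∈ Set.Icc (1 : ℝ) 2) (hy : y ∈ Set.Icc (0.6 : ℝ) 1) :
    1 + 2 * y + Real.sqrt (3 + x ^ 2) + (3 - x * y) / (x + y) ≤ 6 := by
  obtain ⟨hx1, hx2⟩ := hx
  obtain ⟨hy1, hy2⟩ := hy
  have hxy : 0 < x + y := by linarith
  have h1 : Real.sqrt (3 + x ^ 2) ≤ 1.35 + 0.65 * x := by
    rw [show (3 : ℝ) + x ^ 2 = (1.35 + 0.65 * x) ^ 2 - (-0.5775 * x ^ 2 + 1.755 * x - 1.1775) by ring]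
    have h : -0.5775 * x ^ 2 + 1.755 * x - 1.1775 ≥ 0 := by nlinarith [mul_nonneg (sub_nonneg.2 hx1) (sub_nonneg.2 hx2)]
    calc Real.sqrt ((1.35 + 0.65 * x) ^ 2 - (-0.5775 * x ^ 2 + 1.755 * x - 1.1775))
        ≤ Real.sqrt ((1.35 + 0.65 * x) ^ 2) := Real.sqrt_le_sqrt (by linarith)
      _ = |1.35 + 0.65 * x| := Real.sqrt_sq_eq_abs _
      _ = 1.35 + 0.65 * x := abs_of_nonneg (by linarith)
  have h2 : (3 - x * y) / (x + y) ≤ 3.65 - 0.65 * x - 2 * y := by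
    rw [div_le_iff₀ hxy]
    nlinarith [mul_nonneg (sub_nonneg.2 hx1) (sub_nonneg.2 hy2),
      mul_nonneg (sub_nonneg.2 hx2) (sub_nonneg.2 hy1),
      mul_nonneg (sub_nonneg.2 hx1) (sub_nonneg.2 hx2),
      mul_nonneg (sub_nonneg.2 hy1) (sub_nonneg.2 hy2)]
  linarith
end

section
/- For real numbers x ∈ [2,3] and y ∈ [0.6, 1], the inequality 1 + y + 2√(3 + x²) − x + (3 − xy)/(x + y) ≤ 6 holds. -/
theorem stmt_17 (x y : ℝ) (hx : x ∈ Set.Icc (2 : ℝ) 3) (hy : y ∈ Set.Icc (0.6 : ℝ) 1) :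
    1 + y + 2 * Real.sqrt (3 + x ^ 2) - x + (3 - x * y) / (x + y) ≤ 6 := by
  obtain ⟨hx1, hx2⟩ := hx
  obtain ⟨hy1, hy2⟩ := hy
  have hxy : (0:ℝ) < x + y := by nlinarith
  have hsq := Real.sq_sqrt (show (0:ℝ) ≤ 3 + x ^ 2 by positivity)
  have hnn := Real.sqrt_nonneg (3 + x ^ 2)
  have hs : Real.sqrt (3 + x ^ 2) ≤ 0.82 * x + 1.01 := by
    nlinarith [sq_nonneg (Real.sqrt (3 + x ^ 2) - (0.82 * x + 1.01)), sq_nonneg (x - 2), sq_nonneg (x - 3)]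
  have key : (3 - x * y) / (x + y) ≤ 3 - y - 0.64 * x - 0.02 := by
    rw [div_le_iff₀ hxy]
    nlinarith [sq_nonneg (x - 2), sq_nonneg (x - 3), sq_nonneg (y - 1), mul_nonneg (sub_nonneg.2 hy1) (sub_nonneg.2 hx1)]
  linarith
end
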